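/- (Main Lemma, combinatorial form.) Let 𝒟 be an open dense subset of the tree Hechler poset ℍ and let S := {stem(T') : T' ∈ 𝒟}. Let T ∈ ℍ, and let A ⊆ ℕ be such that for every finite sequence t ∈ ℕ^{<ω} and every ordinal α, if the set B := {z ∈ ℕ : t⌢z is β-S-reachable for some β < α} is infinite, then B \ A is infinite. Then there exists T' ∈ 𝒟 with T' ≤_A T, i.e. T' ⊆ T and stem(T') extends stem(T) with no new value in A. -/

import Mathlib

/-!
The stem of every condition `T` is `S`-reachable: otherwise prune `T` to the nodes all of
whose segments above the stem are unreachable. An unreachable node has only finitely many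
reachable successors, so this is again a condition, and by density it contains a member of `𝒟`,
whose stem lies in `S` and is therefore reachable. Starting from the stem, walk up the tree
while decreasing the rank: at an `α`-reachable node, infinitely many successors have smaller
rank, so by the hypothesis on `A` one of them lies in `T` and outside `A`. The walk ends at the
stem `s` of some `T'' ∈ 𝒟` with `s ⊒_A stem(T)`, and `T ∩ T''` is the required condition.
-/

namespace GCH

/-! ### Turing reducibility -/

/-- `RecursiveIn O f` : the partial function `f : ℕ →. ℕ` is partial recursive relative
to the oracle `O`.  This is the relativization of `Nat.Partrec`. -/
inductive RecursiveIn (O : ℕ →. ℕ) : (ℕ →. ℕ) → Prop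
  | oracle : RecursiveIn O O
  | zero : RecursiveIn O (pure 0)
  | succ : RecursiveIn O ↑Nat.succ
  | left : RecursiveIn O ↑fun n : ℕ => n.unpair.1
  | right : RecursiveIn O ↑fun n : ℕ => n.unpair.2
  | pair {f g} : RecursiveIn O f → RecursiveIn O g →
      RecursiveIn O fun n => Nat.pair <$> f n <*> g n
  | comp {f g} : RecursiveIn O f → RecursiveIn O g →
      RecursiveIn O fun n => g n >>= f
  | prec {f g} : RecursiveIn O f → RecursiveIn O g →
      RecursiveIn O (Nat.unpaired fun a n =>
        n.rec (f a) fun y IH => do let i ← IH; g (Nat.pair a (Nat.pair y i)))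
  | rfind {f} : RecursiveIn O f →
      RecursiveIn O fun a => Nat.rfind fun n => (fun m => m = 0) <$> f (Nat.pair a n)

/-- Turing reducibility `f ≤_T g` for total functions `ℕ → ℕ`. -/
def TuringReducible (f g : ℕ → ℕ) : Prop :=
  RecursiveIn (g : ℕ →. ℕ) (f : ℕ →. ℕ)

/-- The Turing join `a ⊕ b` : `(a ⊕ b)(2n) = a(n)`, `(a ⊕ b)(2n+1) = b(n)`. -/
def join (a b : ℕ → ℕ) : ℕ → ℕ := fun n =>
  if n % 2 = 0 then a (n / 2) else b (n / 2)

open Classical in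
/-- The characteristic function of `A ⊆ ℕ`. -/
noncomputable def chi (A : Set ℕ) : ℕ → ℕ := fun n => if n ∈ A then 1 else 0

/-! ### The tree Hechler poset `ℍ` -/

/-- A condition in the tree Hechler poset `ℍ` : a nonempty tree `T ⊆ ℕ^{<ω}` closed under
initial segments, having a stem (the longest node comparable with every node of the tree),
such that every node extending the stem has cofinitely many immediate successors.
The order is inclusion of trees: `T' ≤ T` iff `T'.tree ⊆ T.tree`. -/
structure Hechler where
  /-- the underlying set of finite sequences -/
  tree : Set (List ℕ)
  nonempty : tree.Nonempty
  /-- closed under initial segments -/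
  closed : ∀ ⦃s t : List ℕ⦄, s <+: t → t ∈ tree → s ∈ tree
  /-- the stem -/
  stem : List ℕ
  stem_mem : stem ∈ tree
  /-- the stem is comparable with every node of the tree -/
  stem_comparable : ∀ t ∈ tree, stem <+: t ∨ t <+: stem
  /-- the stem is the longest node comparable with every node of the tree -/
  stem_longest : ∀ s ∈ tree, (∀ t ∈ tree, s <+: t ∨ t <+: s) → s.length ≤ stem.length
  /-- every node extending the stem has cofinitely many immediate successors -/
  succ_cofinite : ∀ t ∈ tree, stem <+: t → {z : ℕ | t ++ [z] ∉ tree}.Finite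

/-- `D ⊆ ℍ` is dense: every condition has a subset in `D`. -/
def HDense (D : Set Hechler) : Prop := ∀ T : Hechler, ∃ T' ∈ D, T'.tree ⊆ T.tree

/-- `D ⊆ ℍ` is open: any condition included in a member of `D` is in `D`. -/
def HOpen (D : Set Hechler) : Prop :=
  ∀ T T' : Hechler, T'.tree ⊆ T.tree → T ∈ D → T' ∈ D

/-- The set of stems of members of `D`. -/
def stems (D : Set Hechler) : Set (List ℕ) := {s | ∃ T ∈ D, T.stem = s}

open Classical in
/-- `ReachAt S α t` : `t` is `α`-`S`-reachable.  `t` is `0`-`S`-reachable iff `t ∈ S`;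
for `α > 0`, `t` is `α`-`S`-reachable iff infinitely many `z` are such that `t ⌢ z` is
`β`-`S`-reachable for some `β < α`. -/
noncomputable def ReachAt (S : Set (List ℕ)) (α : Ordinal.{0}) (t : List ℕ) : Prop :=
  if α = 0 then t ∈ S
  else {z : ℕ | ∃ β : Ordinal.{0}, ∃ _ : β < α, ReachAt S β (t ++ [z])}.Infinite
termination_by α

/-- `t` is `S`-reachable iff it is `α`-`S`-reachable for some ordinal `α`. -/
def SReachable (S : Set (List ℕ)) (t : List ℕ) : Prop := ∃ α : Ordinal.{0}, ReachAt S α t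

/-- `t' ⊒_A t` : `t'` extends `t` and takes no new value in `A`. -/
def ExtOutside (A : Set ℕ) (t t' : List ℕ) : Prop :=
  t <+: t' ∧ ∀ (k : ℕ) (h : k < t'.length), t.length ≤ k → t'.get ⟨k, h⟩ ∉ A

/-- The union of the stems of the `T i` is the total function `g : ℕ → ℕ`:
each stem is an initial segment of `g` and the stem lengths are unbounded. -/
def stemsUnion (T : ℕ → Hechler) (g : ℕ → ℕ) : Prop :=
  (∀ (i k : ℕ) (h : k < (T i).stem.length), (T i).stem.get ⟨k, h⟩ = g k) ∧
    ∀ n : ℕ, ∃ i, n < (T i).stem.length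

open Classical in
/-- The real `A`-encoded by `g` (relative to the fixed function `θ`):
its `i`-th value is `η_A(g(n_i))` where `n_0 < n_1 < ⋯` enumerates `{n | g n ∈ A}`
and `η_A = θ ∘ e_A⁻¹` with `e_A` the increasing enumeration of `A`. -/
noncomputable def encodedReal (θ : ℕ → ℕ) (A : Set ℕ) (g : ℕ → ℕ) : ℕ → ℕ :=
  fun i => θ (Nat.count (· ∈ A) (g (Nat.nth (fun n => g n ∈ A) i)))

section Reachability

variable {S : Set (List ℕ)}

lemma reachAt_zero (t : List ℕ) : ReachAt S 0 t ↔ t ∈ S := by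
  rw [ReachAt]; simp

lemma reachAt_iff_of_ne_zero {α : Ordinal.{0}} (hα : α ≠ 0) (t : List ℕ) :
    ReachAt S α t ↔
      {z : ℕ | ∃ β : Ordinal.{0}, ∃ _ : β < α, ReachAt S β (t ++ [z])}.Infinite := by
  rw [ReachAt]; simp [hα]

lemma sReachable_of_infinite {t : List ℕ} (h : {z : ℕ | SReachable S (t ++ [z])}.Infinite) :
    SReachable S t := by
  choose f hf using fun z : {z // SReachable S (t ++ [z])} => z.2
  have hbdd : BddAbove (Set.range fun z => f z + 1) := Ordinal.bddAbove_of_small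
  have hlt : ∀ z, f z < ⨆ z, f z + 1 := fun z =>
    (Order.lt_add_one_iff.2 le_rfl).trans_le (le_ciSup hbdd z)
  obtain ⟨z₀, hz₀⟩ := h.nonempty
  refine ⟨⨆ z, f z + 1, (reachAt_iff_of_ne_zero (hlt ⟨z₀, hz₀⟩).ne_bot _).2 ?_⟩
  exact h.mono fun z hz => ⟨f ⟨z, hz⟩, hlt _, hf _⟩

lemma finite_sReachable_succ {t : List ℕ} (h : ¬ SReachable S t) :
    {z : ℕ | SReachable S (t ++ [z])}.Finite :=
  Set.not_infinite.1 (mt sReachable_of_infinite h)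

end Reachability

lemma ExtOutside.refl (A : Set ℕ) (t : List ℕ) : ExtOutside A t t :=
  ⟨List.prefix_refl t, fun _ h hk => absurd h (by omega)⟩

lemma ExtOutside.snoc {A : Set ℕ} {t s : List ℕ} {z : ℕ} (h : ExtOutside A t s) (hz : z ∉ A) :
    ExtOutside A t (s ++ [z]) := by
  refine ⟨h.1.trans (List.prefix_append s [z]), fun k hk htk => ?_⟩
  rw [List.get_eq_getElem]
  by_cases hks : k < s.length
  · rw [List.getElem_append_left hks]
    simpa using h.2 k hks htk
  · have hk' : k = s.length := by simp at hk; omega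
    subst hk'
    simpa using hz

lemma length_le_of_succ_cofinite {tr : Set (List ℕ)} {st s : List ℕ}
    (hcof : {z : ℕ | st ++ [z] ∉ tr}.Finite) (hcomp : ∀ t ∈ tr, s <+: t ∨ t <+: s) :
    s.length ≤ st.length := by
  by_contra! hlen
  have hsub : {z : ℕ | st ++ [z] ∉ tr}ᶜ ⊆ {s[st.length]} := by
    intro z hz
    have hget : ∀ {l₁ l₂ : List ℕ} (h : l₁ <+: l₂) (h₁ : st.length < l₁.length),
        l₁[st.length] = l₂[st.length]'(h₁.trans_le h.length_le) := fun h h₁ => h.getElem h₁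
    rcases hcomp _ (not_not.1 hz) with h | h
    · simpa using (hget h hlen).symm
    · simpa using hget h (by simp)
  exact hcof.infinite_compl ((Set.finite_singleton _).subset hsub)

namespace Hechler

def ofSuccCofinite (tree : Set (List ℕ))
    (closed : ∀ ⦃s t : List ℕ⦄, s <+: t → t ∈ tree → s ∈ tree)
    (stem : List ℕ) (stem_mem : stem ∈ tree)
    (stem_comparable : ∀ t ∈ tree, stem <+: t ∨ t <+: stem)
    (succ_cofinite : ∀ t ∈ tree, stem <+: t → {z : ℕ | t ++ [z] ∉ tree}.Finite) : Hechler where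
  tree := tree
  nonempty := ⟨stem, stem_mem⟩
  closed := closed
  stem := stem
  stem_mem := stem_mem
  stem_comparable := stem_comparable
  stem_longest _ _ hcomp :=
    length_le_of_succ_cofinite (succ_cofinite stem stem_mem (List.prefix_refl _)) hcomp
  succ_cofinite := succ_cofinite

lemma stem_prefix_of_subset {T T' : Hechler} (h : T'.tree ⊆ T.tree) : T.stem <+: T'.stem := by
  rcases T.stem_comparable _ (h T'.stem_mem) with h' | h'
  · exact h'
  · have hlen := length_le_of_succ_cofinite
      (T'.succ_cofinite _ T'.stem_mem (List.prefix_refl _))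
      fun t ht => T.stem_comparable t (h ht)
    rw [h'.eq_of_length (le_antisymm h'.length_le hlen)]

lemma exists_subset_forall_mem (T : Hechler) (N : Set (List ℕ)) (hstem : T.stem ∈ N)
    (hN : ∀ t ∈ T.tree, T.stem <+: t → t ∈ N → {z : ℕ | t ++ [z] ∉ N}.Finite) :
    ∃ T' : Hechler, T'.tree ⊆ T.tree ∧ T'.stem = T.stem ∧
      ∀ t ∈ T'.tree, T.stem <+: t → t ∈ N := by
  set tree := {s | s ∈ T.tree ∧ ∀ u, T.stem <+: u → u <+: s → u ∈ N}
  have closed : ∀ ⦃s t : List ℕ⦄, s <+: t → t ∈ tree → s ∈ tree :=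
    fun _ _ hst ht => ⟨T.closed hst ht.1, fun u hu hus => ht.2 u hu (hus.trans hst)⟩
  have stem_mem : T.stem ∈ tree := ⟨T.stem_mem, fun u hu hus => by
    rwa [hus.eq_of_length (le_antisymm hus.length_le hu.length_le)]⟩
  have succ_mem : ∀ t ∈ tree, ∀ z, t ++ [z] ∈ T.tree → t ++ [z] ∈ N → t ++ [z] ∈ tree :=
    fun t ht z hT hz => ⟨hT, fun u hu hut => by
      rcases List.prefix_concat_iff.1 hut with rfl | hut
      · exact hz
      · exact ht.2 u hu hut⟩
  have succ_cofinite : ∀ t ∈ tree, T.stem <+: t → {z : ℕ | t ++ [z] ∉ tree}.Finite := by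
    intro t ht hst
    refine ((T.succ_cofinite t ht.1 hst).union
      (hN t ht.1 hst (ht.2 t hst (List.prefix_refl t)))).subset fun z hz => ?_
    show t ++ [z] ∉ T.tree ∨ t ++ [z] ∉ N
    by_contra! hz'
    exact hz (succ_mem t ht z hz'.1 hz'.2)
  exact ⟨ofSuccCofinite tree closed T.stem stem_mem (fun t ht => T.stem_comparable t ht.1)
      succ_cofinite, fun t ht => ht.1, rfl, fun t ht hst => ht.2 t hst (List.prefix_refl t)⟩

def inter (T T'' : Hechler) (hmem : T''.stem ∈ T.tree) (hstem : T.stem <+: T''.stem) :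
    Hechler :=
  ofSuccCofinite (T.tree ∩ T''.tree)
    (fun _ _ hst ht => ⟨T.closed hst ht.1, T''.closed hst ht.2⟩)
    T''.stem ⟨hmem, T''.stem_mem⟩ (fun t ht => T''.stem_comparable t ht.2)
    fun t ht hst => ((T.succ_cofinite t ht.1 (hstem.trans hst)).union
      (T''.succ_cofinite t ht.2 hst)).subset fun z hz => by
        show t ++ [z] ∉ T.tree ∨ t ++ [z] ∉ T''.tree
        by_contra! h
        exact hz h

end Hechler

lemma sReachable_stem {D : Set Hechler} (hdense : HDense D) (T : Hechler) :
    SReachable (stems D) T.stem := by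
  by_contra hT
  obtain ⟨T', hT'T, hstem, hT'⟩ := T.exists_subset_forall_mem {t | ¬ SReachable (stems D) t} hT
    fun t _ _ ht => by simpa using finite_sReachable_succ ht
  obtain ⟨T'', hT''D, hT''T'⟩ := hdense T'
  have hprefix : T.stem <+: T''.stem := hstem ▸ Hechler.stem_prefix_of_subset hT''T'
  exact hT' _ (hT''T' T''.stem_mem) hprefix ⟨0, (reachAt_zero _).2 ⟨T'', hT''D, rfl⟩⟩

lemma exists_mem_extOutside_of_reachAt {S : Set (List ℕ)} (T : Hechler) {A : Set ℕ}
    (hA : ∀ (t : List ℕ) (α : Ordinal.{0}),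
      {z : ℕ | ∃ β : Ordinal.{0}, ∃ _ : β < α, ReachAt S β (t ++ [z])}.Infinite →
      ({z : ℕ | ∃ β : Ordinal.{0}, ∃ _ : β < α, ReachAt S β (t ++ [z])} \ A).Infinite)
    (α : Ordinal.{0}) {t : List ℕ} (hreach : ReachAt S α t) (ht : t ∈ T.tree)
    (hext : ExtOutside A T.stem t) : ∃ t' ∈ T.tree, t' ∈ S ∧ ExtOutside A T.stem t' := by
  induction α using WellFoundedLT.induction generalizing t with
  | _ α IH =>
    by_cases hα : α = 0
    · subst hα
      exact ⟨t, ht, (reachAt_zero t).1 hreach, hext⟩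
    · obtain ⟨z, ⟨⟨β, hβ, hz⟩, hzA⟩, hzT⟩ :=
        ((hA t α ((reachAt_iff_of_ne_zero hα t).1 hreach)).sdiff
          (T.succ_cofinite t ht hext.1)).nonempty
      exact IH β hβ hz (not_not.1 hzT) (hext.snoc hzA)

/-- **Main Lemma** (combinatorial form). -/
theorem main_lemma (D : Set Hechler) (hopen : HOpen D) (hdense : HDense D)
    (T : Hechler) (A : Set ℕ)
    (hstick : ∀ (t : List ℕ) (α : Ordinal.{0}),
      {z : ℕ | ∃ β : Ordinal.{0}, ∃ _ : β < α,
        ReachAt (stems D) β (t ++ [z])}.Infinite →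
      ({z : ℕ | ∃ β : Ordinal.{0}, ∃ _ : β < α,
        ReachAt (stems D) β (t ++ [z])} \ A).Infinite) :
    ∃ T' ∈ D, T'.tree ⊆ T.tree ∧ ExtOutside A T.stem T'.stem := by
  obtain ⟨α, hα⟩ := sReachable_stem hdense T
  obtain ⟨_, hmem, ⟨T'', hT''D, rfl⟩, hext⟩ :=
    exists_mem_extOutside_of_reachAt T hstick α hα T.stem_mem (ExtOutside.refl A T.stem)
  exact ⟨T.inter T'' hmem hext.1, hopen T'' _ (fun _ hx => hx.2) hT''D, fun _ hx => hx.1, hext⟩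

end GCH
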